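/- arXiv:1704.04948 — 3 statements merged into one kernel-verified Lean document; each statement's English description precedes it below -/
import Mathlib

section
/- In the semiring Γ of values of the curve XY = 0, namely Γ = {(0,0)} ∪ {(1+a,1+b) : a,b ∈ ℕ∪{∞}}, the only irreducible elements with some infinite coordinate are (1,∞) and (∞,1). Here γ ∈ Γ \ {(0,0)} is irreducible if whenever γ = α + β with α, β ∈ Γ, then α = γ or β = γ. -/
/-- In the semiring of values `Γ = {(0,0)} ∪ {(1+a,1+b) : a,b ∈ ℕ∞}` of the curve
`XY = 0`, the only irreducible elements having some infinite coordinate are `(1,∞)`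
and `(∞,1)`.  Here `γ ≠ (0,0)` is irreducible if `γ = α + β` with `α, β ∈ Γ`
forces `α = γ` or `β = γ`. -/
theorem stmt6
    (Γ : Set (ℕ∞ × ℕ∞))
    (hΓ : Γ = {((0 : ℕ∞), (0 : ℕ∞))} ∪ {p | ∃ a b : ℕ∞, p = (1 + a, 1 + b)}) :
    ∀ γ ∈ Γ, γ ≠ ((0 : ℕ∞), (0 : ℕ∞)) →
      (γ.1 = ⊤ ∨ γ.2 = ⊤) →
      ((∀ α ∈ Γ, ∀ β ∈ Γ, γ = α + β → α = γ ∨ β = γ) ↔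
        (γ = ((1 : ℕ∞), (⊤ : ℕ∞)) ∨ γ = ((⊤ : ℕ∞), (1 : ℕ∞)))) := by
  have hmem : ∀ p : ℕ∞ × ℕ∞, p ∈ Γ ↔
      p = ((0 : ℕ∞), (0 : ℕ∞)) ∨ ∃ a b : ℕ∞, p = (1 + a, 1 + b) := by
    intro p; rw [hΓ]; simp [Set.mem_union]
  intro γ hγ hne hinf
  rcases (hmem γ).1 hγ with rfl | ⟨a, b, rfl⟩
  · exact absurd rfl hne
  have h1T : ((1 : ℕ∞), (⊤ : ℕ∞)) ∈ Γ := (hmem _).2 (Or.inr ⟨0, ⊤, by simp⟩)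
  have hT1 : ((⊤ : ℕ∞), (1 : ℕ∞)) ∈ Γ := (hmem _).2 (Or.inr ⟨⊤, 0, by simp⟩)
  constructor
  · intro H
    have hab : a = ⊤ ∨ b = ⊤ := by
      rcases hinf with h | h
      · left
        by_contra ha
        exact (WithTop.add_ne_top.2 ⟨ENat.one_ne_top, ha⟩) h
      · right
        by_contra hb
        exact (WithTop.add_ne_top.2 ⟨ENat.one_ne_top, hb⟩) h
    -- case analysis
    cases a using ENat.recTopCoe with
    | top =>
      cases b using ENat.recTopCoe with
      | top =>
        exfalso
        have := H _ h1T _ hT1 (by simp)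
        rcases this with h | h
        · simp [Prod.ext_iff] at h
        · simp [Prod.ext_iff] at h
      | coe m =>
        cases m with
        | zero => right; simp
        | succ k =>
          exfalso
          have hβ : ((⊤ : ℕ∞), ((k + 1 : ℕ) : ℕ∞)) ∈ Γ :=
            (hmem _).2 (Or.inr ⟨⊤, (k : ℕ∞), by push_cast; simp [add_comm]⟩)
          have := H _ hT1 _ hβ (by
            refine Prod.ext ?_ ?_ <;> simp <;> push_cast <;> ring)
          rcases this with h | h
          · have := congrArg Prod.snd h
            simp at this
            have : (1 : ℕ) = 1 + (k + 1) := by exact_mod_cast this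
            omega
          · have := congrArg Prod.snd h
            simp at this
            have : (k + 1 : ℕ) = 1 + (k + 1) := by exact_mod_cast this
            omega
    | coe n =>
      have hb : b = ⊤ := by
        rcases hab with h | h
        · exact absurd h (by simp)
        · exact h
      subst hb
      cases n with
      | zero => left; simp
      | succ k =>
        exfalso
        have hβ : (((k + 1 : ℕ) : ℕ∞), (⊤ : ℕ∞)) ∈ Γ :=
          (hmem _).2 (Or.inr ⟨(k : ℕ∞), ⊤, by push_cast; simp [add_comm]⟩)
        have := H _ h1T _ hβ (by
          refine Prod.ext ?_ ?_ <;> simp <;> push_cast <;> ring)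
        rcases this with h | h
        · have := congrArg Prod.fst h
          simp at this
          have : (1 : ℕ) = 1 + (k + 1) := by exact_mod_cast this
          omega
        · have := congrArg Prod.fst h
          simp at this
          have : (k + 1 : ℕ) = 1 + (k + 1) := by exact_mod_cast this
          omega
  · intro hγeq α hα β hβ hsum
    rcases (hmem α).1 hα with rfl | ⟨c, d, rfl⟩
    · right
      rw [hsum]; exact (zero_add β).symm
    rcases (hmem β).1 hβ with rfl | ⟨e, f, rfl⟩
    · left
      rw [hsum]; simp
    exfalso
    rcases hγeq with h | h
    · have h1 := congrArg Prod.fst h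
      have h2 := congrArg Prod.fst hsum
      rw [h1] at h2
      simp at h2
      have : (2 : ℕ∞) ≤ 1 + c + (1 + e) := by
        calc (2 : ℕ∞) = 1 + 0 + (1 + 0) := by norm_num
        _ ≤ 1 + c + (1 + e) := by gcongr <;> simp
      rw [← h2] at this
      norm_num at this
    · have h1 := congrArg Prod.snd h
      have h2 := congrArg Prod.snd hsum
      rw [h1] at h2
      simp at h2
      have : (2 : ℕ∞) ≤ 1 + d + (1 + f) := by
        calc (2 : ℕ∞) = 1 + 0 + (1 + 0) := by norm_num
        _ ≤ 1 + d + (1 + f) := by gcongr <;> simp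
      rw [← h2] at this
      norm_num at this
end

section
/- Let Γ ⊆ (ℕ∪{∞})² be the semiring of values {(0,0)} ∪ {(1+a,1+b) : a,b ∈ ℕ∪{∞}} of the curve XY = 0. Then every element γ of Γ \ {(0,0)} that is an irreducible absolute point equals (1,∞) or (∞,1), where γ is an absolute point if for every proper nonempty subset J of I_γ = {i : γ_i ≠ ∞}, the set F_J(γ) = {α ∈ Γ : α_i > γ_i for i ∈ I_γ \ J, α_j = γ_j for j ∉ I_γ \ J} is empty. -/
/-- In the semiring of values `Γ = {(0,0)} ∪ {(1+a,1+b) : a,b ∈ ℕ∞}` of the curve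
`XY = 0` (written as functions `Fin 2 → ℕ∞`), every `γ ∈ Γ \ {0}` which is an
irreducible absolute point equals `(1,∞)` or `(∞,1)`.  Here `I_γ = {i : γ i ≠ ∞}`,
`γ` is absolute if for every proper nonempty subset `J` of `I_γ` the set
`F_J(γ) = {α ∈ Γ : α_i > γ_i for i ∈ I_γ \ J, α_j = γ_j for j ∉ I_γ \ J}` is empty,
and `γ` is irreducible if `γ = α + β` with `α, β ∈ Γ` forces `α = γ` or `β = γ`. -/
theorem stmt10
    (Γ : Set (Fin 2 → ℕ∞))
    (hΓ : Γ = {(0 : Fin 2 → ℕ∞)} ∪ {γ | ∀ i, 1 ≤ γ i}) :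
    ∀ γ ∈ Γ, γ ≠ 0 →
      (∀ α ∈ Γ, ∀ β ∈ Γ, γ = α + β → α = γ ∨ β = γ) →
      (∀ J : Set (Fin 2), J.Nonempty → J ⊂ {i | γ i ≠ ⊤} →
        ¬ ∃ α ∈ Γ, (∀ i ∈ {i | γ i ≠ ⊤} \ J, γ i < α i) ∧
            ∀ j ∉ {i | γ i ≠ ⊤} \ J, α j = γ j) →
      γ = ![1, ⊤] ∨ γ = ![⊤, 1] := by
  subst hΓ
  intro γ hγ hγ0 hirr habs
  have hge : ∀ i, 1 ≤ γ i := by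
    rcases hγ with h | h
    · exact absurd h hγ0
    · exact h
  have hmemtop : ∀ a : ℕ∞, 1 ≤ a →
      (![a, ⊤] : Fin 2 → ℕ∞) ∈ ({(0 : Fin 2 → ℕ∞)} ∪ {γ | ∀ i, 1 ≤ γ i}) := by
    intro a ha
    right; intro i; fin_cases i <;> simp [ha]
  have hmemtop' : ∀ a : ℕ∞, 1 ≤ a →
      (![⊤, a] : Fin 2 → ℕ∞) ∈ ({(0 : Fin 2 → ℕ∞)} ∪ {γ | ∀ i, 1 ≤ γ i}) := by
    intro a ha
    right; intro i; fin_cases i <;> simp [ha]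
  -- absoluteness: not both coordinates finite
  have htop : γ 0 = ⊤ ∨ γ 1 = ⊤ := by
    by_contra h
    push_neg at h
    obtain ⟨h0, h1⟩ := h
    have hI : {i : Fin 2 | γ i ≠ ⊤} = Set.univ := by
      ext i; fin_cases i <;> simp [h0, h1]
    apply habs {0} ⟨0, rfl⟩
    · rw [hI]
      refine Set.ssubset_univ_iff.mpr ?_
      intro h
      have : (1 : Fin 2) ∈ ({0} : Set (Fin 2)) := h ▸ Set.mem_univ 1
      simp at this
    · refine ⟨![γ 0, γ 1 + 1], ?_, ?_, ?_⟩
      · right; intro i; fin_cases i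
        · simpa using hge 0
        · simp
      · intro i hi
        rw [hI] at hi
        simp only [Set.mem_diff, Set.mem_univ, Set.mem_singleton_iff, true_and] at hi
        have : i = 1 := by omega
        subst this
        lift γ 1 to ℕ using h1 with n
        simp only [Matrix.cons_val_one, Matrix.head_cons, Matrix.cons_val_zero]
        exact_mod_cast Nat.lt_succ_self n
      · intro j hj
        rw [hI] at hj
        simp only [Set.mem_diff, Set.mem_univ, Set.mem_singleton_iff, true_and,
          not_not] at hj
        subst hj
        rfl
  -- irreducibility: the finite coordinate is 1
  rcases htop with h1 | h1
  · -- γ 0 = ⊤ ; show γ 1 = 1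
    right
    have hg1 : γ 1 = 1 := by
      rcases eq_or_ne (γ 1) ⊤ with ht | ht
      · exfalso
        have hsum : γ = ![⊤, 1] + ![1, ⊤] := by
          funext i; fin_cases i <;> simp [h1, ht]
        rcases hirr _ (hmemtop' 1 le_rfl) _ (hmemtop 1 le_rfl) hsum with h | h
        · have := congrFun h 1
          simp [ht] at this
        · have := congrFun h 0
          simp [h1] at this
      · lift γ 1 to ℕ using ht with n hn
        have hn1 : 1 ≤ n := by
          have := hge 1; rw [← hn] at this; exact_mod_cast this
        by_contra hne
        have hn2 : 2 ≤ n := by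
          rcases Nat.lt_or_ge n 2 with h | h
          · interval_cases n
            · simp at hne
          · exact h
        have hsum : γ = ![⊤, 1] + ![⊤, (↑(n-1) : ℕ∞)] := by
          funext i; fin_cases i <;> simp [h1, ← hn]
          exact_mod_cast (by omega : n = 1 + (n - 1))
        have hmem2 : (![⊤, (↑(n-1) : ℕ∞)] : Fin 2 → ℕ∞) ∈
            ({(0 : Fin 2 → ℕ∞)} ∪ {γ | ∀ i, 1 ≤ γ i}) :=
          hmemtop' _ (by exact_mod_cast (by omega : 1 ≤ n - 1))
        rcases hirr _ (hmemtop' 1 le_rfl) _ hmem2 hsum with h | h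
        · have := congrFun h 1
          rw [← hn] at this
          simp at this
          have : (1:ℕ) = n := by exact_mod_cast this
          omega
        · have := congrFun h 1
          rw [← hn] at this
          simp at this
          have : n - 1 = n := by exact_mod_cast this
          omega
    funext i; fin_cases i <;> simp [h1, hg1]
  · -- γ 1 = ⊤ ; show γ 0 = 1
    left
    have hg0 : γ 0 = 1 := by
      rcases eq_or_ne (γ 0) ⊤ with ht | ht
      · exfalso
        have hsum : γ = ![1, ⊤] + ![⊤, 1] := by
          funext i; fin_cases i <;> simp [h1, ht]
        rcases hirr _ (hmemtop 1 le_rfl) _ (hmemtop' 1 le_rfl) hsum with h | h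
        · have := congrFun h 0
          simp [ht] at this
        · have := congrFun h 1
          simp [h1] at this
      · lift γ 0 to ℕ using ht with n hn
        have hn1 : 1 ≤ n := by
          have := hge 0; rw [← hn] at this; exact_mod_cast this
        by_contra hne
        have hn2 : 2 ≤ n := by
          rcases Nat.lt_or_ge n 2 with h | h
          · interval_cases n
            · simp at hne
          · exact h
        have hsum : γ = ![1, ⊤] + ![(↑(n-1) : ℕ∞), ⊤] := by
          funext i; fin_cases i <;> simp [h1, ← hn]
          exact_mod_cast (by omega : n = 1 + (n - 1))
        have hmem2 : (![(↑(n-1) : ℕ∞), ⊤] : Fin 2 → ℕ∞) ∈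
            ({(0 : Fin 2 → ℕ∞)} ∪ {γ | ∀ i, 1 ≤ γ i}) :=
          hmemtop _ (by exact_mod_cast (by omega : 1 ≤ n - 1))
        rcases hirr _ (hmemtop 1 le_rfl) _ hmem2 hsum with h | h
        · have := congrFun h 0
          rw [← hn] at this
          simp at this
          have : (1:ℕ) = n := by exact_mod_cast this
          omega
        · have := congrFun h 0
          rw [← hn] at this
          simp at this
          have : n - 1 = n := by exact_mod_cast this
          omega
    funext i; fin_cases i <;> simp [h1, hg0]
end

section
/- Let Γ ⊆ (ℕ∪{∞})^r be a value set and suppose {γ₁,…,γ_m} ⊆ Γ generates Γ as a tropical semiring: every γ ∈ Γ can be written γ = min{ Σ_j α_{1j} γ_j, …, Σ_j α_{sj} γ_j } for some s ≥ 1 and α_{ij} ∈ ℕ. If γ ∈ Γ is irreducible (γ ≠ 0 and γ = α + β with α, β ∈ Γ implies α = γ or β = γ) and γ is an absolute point (for any proper subset J ⊂ I_γ, no element of Γ agrees with γ outside I_γ \ J and strictly exceeds it on I_γ \ J), then γ ∈ {γ₁,…,γ_m}. -/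
/-- Suppose `{γ₁,…,γ_m} ⊆ Γ` generates `Γ ⊆ (ℕ∪{∞})^r` as a tropical semiring: every
`γ ∈ Γ` is `min {Σ_j A_{1j} γ_j, …, Σ_j A_{sj} γ_j}` for some `s ≥ 1`, `A_{ij} ∈ ℕ`.
If `γ ∈ Γ` is irreducible and an absolute point, then `γ` is one of the generators. -/
theorem stmt16 {r : ℕ} (Γ : Set (Fin r → ℕ∞))
    (h0 : (0 : Fin r → ℕ∞) ∈ Γ)
    (hadd : ∀ a ∈ Γ, ∀ b ∈ Γ, a + b ∈ Γ)
    (hmin : ∀ a ∈ Γ, ∀ b ∈ Γ, (fun i => min (a i) (b i)) ∈ Γ)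
    (hzero : ∀ γ ∈ Γ, (∃ i, γ i = 0) → γ = 0)
    (m : ℕ) (V : Fin m → Fin r → ℕ∞) (hV : ∀ j, V j ∈ Γ)
    (hgen : ∀ γ ∈ Γ, ∃ (s : ℕ) (A : Fin (s + 1) → Fin m → ℕ),
        γ = Finset.univ.inf' Finset.univ_nonempty fun i => ∑ j, A i j • V j)
    (γ : Fin r → ℕ∞) (hγ : γ ∈ Γ) (hne : γ ≠ 0)
    (hirr : ∀ α ∈ Γ, ∀ β ∈ Γ, γ = α + β → α = γ ∨ β = γ)
    (habs : ∀ J : Set (Fin r), J ⊂ {i | γ i ≠ ⊤} →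
      ¬ ∃ α ∈ Γ, (∀ i ∈ {i | γ i ≠ ⊤} \ J, γ i < α i) ∧
          ∀ j ∉ {i | γ i ≠ ⊤} \ J, α j = γ j) :
    ∃ j, γ = V j := by
  -- nsmul membership
  have hsmul : ∀ (n : ℕ) (v : Fin r → ℕ∞), v ∈ Γ → n • v ∈ Γ := by
    intro n v hv
    induction n with
    | zero => simpa using h0
    | succ n ih => rw [succ_nsmul]; exact hadd _ ih _ hv
  -- any element of Γ above γ equals γ (from the absolute point property)
  have key : ∀ α ∈ Γ, γ ≤ α → α = γ := by
    intro α hα hge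
    set J : Set (Fin r) := {i | γ i ≠ ⊤ ∧ α i = γ i} with hJdef
    by_cases hJ : J = {i | γ i ≠ ⊤}
    · funext i
      by_cases hi : γ i = ⊤
      · exact le_antisymm (hi ▸ le_top) (hi ▸ hge i)
      · exact (hJ ▸ (hi : i ∈ {i | γ i ≠ ⊤}) : i ∈ J).2
    · exfalso
      have hsub : J ⊆ {i | γ i ≠ ⊤} := fun i hi => hi.1
      apply habs J (hsub.ssubset_of_ne hJ)
      refine ⟨α, hα, ?_, ?_⟩
      · intro i hi
        rcases hi with ⟨hi1, hi2⟩
        have hne' : α i ≠ γ i := fun h => hi2 ⟨hi1, h⟩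
        exact lt_of_le_of_ne (hge i) (Ne.symm hne')
      · intro j hj
        by_cases hjt : γ j = ⊤
        · exact le_antisymm (hjt ▸ le_top) (hjt ▸ hge j)
        · have : j ∈ J := by
            by_contra hjJ
            exact hj ⟨hjt, hjJ⟩
          exact this.2
  -- generation: some term equals γ
  obtain ⟨s, A, hA⟩ := hgen γ hγ
  have htΓ : (∑ j, A 0 j • V j) ∈ Γ :=
    Finset.sum_induction _ (· ∈ Γ) (fun a b ha hb => hadd a ha b hb) h0
      (fun j _ => hsmul _ _ (hV j))
  have hle : γ ≤ ∑ j, A 0 j • V j := by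
    rw [hA]; exact Finset.inf'_le _ (Finset.mem_univ 0)
  have hsumγ : γ = ∑ j, A 0 j • V j := (key _ htΓ hle).symm
  -- irreducibility: a sum in Γ equal to γ has a summand equal to γ
  have hsum : ∀ (S : Finset (Fin m)), γ = ∑ x ∈ S, A 0 x • V x → ∃ x ∈ S, γ = A 0 x • V x := by
    intro S
    induction S using Finset.induction_on with
    | empty => intro h; simp at h; exact absurd h hne
    | @insert a S ha ih =>
      intro h
      rw [Finset.sum_insert ha] at h
      have hSΓ : (∑ x ∈ S, A 0 x • V x) ∈ Γ :=
        Finset.sum_induction _ (· ∈ Γ) (fun a b ha hb => hadd a ha b hb) h0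
          (fun j _ => hsmul _ _ (hV j))
      rcases hirr _ (hsmul _ _ (hV a)) _ hSΓ h with h1 | h2
      · exact ⟨a, Finset.mem_insert_self a S, h1.symm⟩
      · obtain ⟨x, hx, hx2⟩ := ih h2.symm
        exact ⟨x, Finset.mem_insert_of_mem hx, hx2⟩
  obtain ⟨j, _, hj⟩ := hsum Finset.univ hsumγ
  -- peel off the scalar
  have hpow : ∀ (n : ℕ) (v : Fin r → ℕ∞), v ∈ Γ → γ = n • v → γ = v := by
    intro n
    induction n with
    | zero => intro v _ h; rw [zero_nsmul] at h; exact absurd h hne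
    | succ n ih =>
      intro v hv h
      rw [succ_nsmul] at h
      rcases hirr _ (hsmul n v hv) _ hv h with h1 | h2
      · exact ih v hv h1.symm
      · exact h2.symm
  exact ⟨j, hpow _ _ (hV j) hj⟩
end
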